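/- arXiv:2512.24751 — 2 statements merged into one kernel-verified Lean document; each statement's English description precedes it below -/
import Mathlib

section
/- Let G be a locally compact second-countable amenable group with right-invariant Haar measure μ and Følner sequence (F_n), and let u be a strongly continuous unitary representation of G on a Hilbert space H. Then the averages B_n x := (1/μ(F_n)) ∫_{F_n} u_s(x) dμ(s) converge in norm for every x ∈ H; the limit is the orthogonal projection of x onto the subspace of G-invariant vectors. -/
/-!
The averages `B_n` are linear contractions fixing every invariant vector, so it suffices to show
`B_n y → 0` for `y` orthogonal to the invariant vectors. For a unitary family, the orthogonal
complement of the invariant vectors is the closed span of the coboundaries `v - u g v`. On a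
coboundary, right invariance of `μ` turns `B_n (v - u g v)` into a difference of integrals over
`F n` and `F n * {g}`, of norm at most `μ(F n * {g} ∆ F n) / μ(F n) * ‖v‖ → 0` by the Følner
condition; equicontinuity of the contractions `B_n` extends the convergence to the closure.
-/

open MeasureTheory Filter Topology Pointwise

section TendstoZero

variable {𝕜 E F ι : Type*} [NormedField 𝕜] [SeminormedAddCommGroup E] [NormedSpace 𝕜 E]
  [SeminormedAddCommGroup F] [NormedSpace 𝕜 F]

def LinearMap.tendstoZeroSubmodule (T : ι → E →ₗ[𝕜] F) (l : Filter ι) : Submodule 𝕜 E where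
  carrier := {x | Tendsto (T · x) l (𝓝 0)}
  add_mem' {x y} hx hy := by simpa using hx.add hy
  zero_mem' := by simpa using tendsto_const_nhds
  smul_mem' c x hx := by simpa using hx.const_smul c

theorem LinearMap.isClosed_tendstoZeroSubmodule {T : ι → E →ₗ[𝕜] F} (l : Filter ι) {C : ℝ}
    (hT : ∀ i x, ‖T i x‖ ≤ C * ‖x‖) : IsClosed (tendstoZeroSubmodule T l : Set E) :=
  (LipschitzWith.uniformEquicontinuous (fun i => T i) _
    fun i => AddMonoidHomClass.lipschitz_of_bound (T i) C (hT i)).equicontinuous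
    |>.isClosed_setOfPred_tendsto continuous_const

theorem LinearMap.tendsto_zero_of_mem_topologicalClosure {T : ι → E →ₗ[𝕜] F} {l : Filter ι}
    {C : ℝ} (hT : ∀ i x, ‖T i x‖ ≤ C * ‖x‖) {S : Submodule 𝕜 E}
    (hS : S ≤ tendstoZeroSubmodule T l) {x : E} (hx : x ∈ S.topologicalClosure) :
    Tendsto (T · x) l (𝓝 0) :=
  S.topologicalClosure_minimal hS (isClosed_tendstoZeroSubmodule l hT) hx

end TendstoZero

theorem tendsto_starProjection_of_tendsto_zero_orthogonal {𝕜 H ι : Type*} [RCLike 𝕜]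
    [NormedAddCommGroup H] [InnerProductSpace 𝕜 H] {T : ι → H →ₗ[𝕜] H} {l : Filter ι}
    (V : Submodule 𝕜 H) [V.HasOrthogonalProjection] (hV : ∀ i, ∀ z ∈ V, T i z = z)
    (hVperp : ∀ y ∈ Vᗮ, Tendsto (T · y) l (𝓝 0)) (x : H) :
    Tendsto (T · x) l (𝓝 (V.starProjection x)) := by
  have hsplit : ∀ i, T i x = V.starProjection x + T i (x - V.starProjection x) := fun i => by
    rw [map_sub, hV i _ (V.starProjection_apply_mem x), add_sub_cancel]
  simp_rw [hsplit]
  simpa using tendsto_const_nhds.add (hVperp _ (V.sub_starProjection_mem_orthogonal x))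

section FixedVectors

variable {𝕜 H ι : Type*} [RCLike 𝕜] [NormedAddCommGroup H] [InnerProductSpace 𝕜 H]

def commonFixedSubmodule (u : ι → H →L[𝕜] H) : Submodule 𝕜 H :=
  ⨅ i, (u i : H →ₗ[𝕜] H).fixedSubmodule

theorem mem_commonFixedSubmodule {u : ι → H →L[𝕜] H} {z : H} :
    z ∈ commonFixedSubmodule u ↔ ∀ i, u i z = z := by
  simp [commonFixedSubmodule, Submodule.mem_iInf, LinearMap.mem_fixedSubmodule_iff]

def coboundarySpan (u : ι → H →L[𝕜] H) : Submodule 𝕜 H :=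
  Submodule.span 𝕜 (Set.range fun p : ι × H => p.2 - u p.1 p.2)

theorem isClosed_commonFixedSubmodule (u : ι → H →L[𝕜] H) :
    IsClosed (commonFixedSubmodule u : Set H) := by
  rw [commonFixedSubmodule, Submodule.coe_iInf]
  exact isClosed_iInter fun i => isClosed_eq (u i).continuous continuous_id

variable {u : ι → H →L[𝕜] H}

-- `w ⊥ w - u i w` together with `‖u i w‖ = ‖w‖` forces `‖w - u i w‖ = 0`.
theorem orthogonal_coboundarySpan (hu : ∀ i x, ‖u i x‖ = ‖x‖) :
    (coboundarySpan u)ᗮ = commonFixedSubmodule u := by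
  ext w
  have hspan : w ∈ (coboundarySpan u)ᗮ ↔ ∀ i v, inner 𝕜 (v - u i v) w = 0 := by
    rw [coboundarySpan, ← Submodule.span_singleton_le_iff_mem, ← Submodule.isOrtho_iff_le,
      Submodule.isOrtho_comm, Submodule.isOrtho_span]
    simp only [Set.forall_mem_range, Set.mem_singleton_iff, forall_eq, Prod.forall]
  rw [hspan, mem_commonFixedSubmodule]
  refine ⟨fun h i => ?_, fun h i v => ?_⟩
  · have hw := h i w
    rw [inner_sub_left, sub_eq_zero] at hw
    have : ‖w - u i w‖ ^ 2 = 0 := by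
      rw [norm_sub_sq (𝕜 := 𝕜), inner_re_symm (𝕜 := 𝕜), ← hw, inner_self_eq_norm_sq, hu]
      ring
    exact (sub_eq_zero.mp (by simpa using this)).symm
  · let U : H →ₗᵢ[𝕜] H := ⟨u i, hu i⟩
    rw [inner_sub_left, sub_eq_zero]
    nth_rw 2 [← h i]
    exact (U.inner_map_map v w).symm

theorem orthogonal_commonFixedSubmodule [CompleteSpace H] (hu : ∀ i x, ‖u i x‖ = ‖x‖) :
    (commonFixedSubmodule u)ᗮ = (coboundarySpan u).topologicalClosure := by
  rw [← orthogonal_coboundarySpan hu, Submodule.orthogonal_orthogonal_eq_closure]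

end FixedVectors

theorem norm_setIntegral_sub_setIntegral_le {α E : Type*} [MeasurableSpace α] {μ : Measure α}
    [NormedAddCommGroup E] [NormedSpace ℝ E] {f : α → E} {A B : Set α} {C : ℝ}
    (hA : MeasurableSet A) (hB : MeasurableSet B) (hAfin : μ A < ⊤) (hBfin : μ B < ⊤)
    (hfA : IntegrableOn f A μ) (hfB : IntegrableOn f B μ) (hC : ∀ x, ‖f x‖ ≤ C) :
    ‖∫ x in A, f x ∂μ - ∫ x in B, f x ∂μ‖ ≤ C * μ.real (symmDiff A B) := by
  have hAB : μ (A \ B) < ⊤ := (measure_mono Set.sdiff_subset).trans_lt hAfin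
  have hBA : μ (B \ A) < ⊤ := (measure_mono Set.sdiff_subset).trans_lt hBfin
  have hsplit : ∫ x in A, f x ∂μ - ∫ x in B, f x ∂μ
      = ∫ x in A \ B, f x ∂μ - ∫ x in B \ A, f x ∂μ := by
    rw [← integral_inter_add_sdiff hB hfA, ← integral_inter_add_sdiff hA hfB, Set.inter_comm]
    abel
  calc ‖∫ x in A, f x ∂μ - ∫ x in B, f x ∂μ‖
      ≤ ‖∫ x in A \ B, f x ∂μ‖ + ‖∫ x in B \ A, f x ∂μ‖ := hsplit ▸ norm_sub_le _ _
    _ ≤ C * μ.real (A \ B) + C * μ.real (B \ A) :=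
      add_le_add (norm_setIntegral_le_of_norm_le_const hAB fun x _ => hC x)
        (norm_setIntegral_le_of_norm_le_const hBA fun x _ => hC x)
    _ = C * μ.real (symmDiff A B) := by
      rw [Set.symmDiff_def, measureReal_union disjoint_sdiff_sdiff (hB.diff hA) hAB.ne hBA.ne,
        mul_add]

section RightTranslate

variable {G E : Type*} [Group G] [MeasurableSpace G] [MeasurableMul G] {μ : Measure G}
  [μ.IsMulRightInvariant] [NormedAddCommGroup E]

theorem measure_mul_singleton (A : Set G) (g : G) : μ (A * {g}) = μ A := by
  rw [Set.mul_singleton, Set.image_mul_right, measure_preimage_mul_right]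

theorem integrableOn_mul_singleton_iff {f : G → E} {A : Set G} {g : G} :
    IntegrableOn f (A * {g}) μ ↔ IntegrableOn (fun t => f (t * g)) A μ := by
  rw [Set.mul_singleton, (measurePreserving_mul_right μ g).integrableOn_image
    (MeasurableEquiv.mulRight g).measurableEmbedding]
  rfl

variable [NormedSpace ℝ E]

theorem setIntegral_mul_singleton (f : G → E) (A : Set G) (g : G) :
    ∫ t in A * {g}, f t ∂μ = ∫ t in A, f (t * g) ∂μ := by
  rw [Set.mul_singleton, (measurePreserving_mul_right μ g).setIntegral_image_emb
    (MeasurableEquiv.mulRight g).measurableEmbedding]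

end RightTranslate

section Average

variable {α 𝕜 E : Type*} [MeasurableSpace α] {μ : Measure α} [NontriviallyNormedField 𝕜]
  [NormedAddCommGroup E] [NormedSpace ℝ E] [NormedSpace 𝕜 E] [SMulCommClass ℝ 𝕜 E]

theorem norm_setAverage_le {f : α → E} {A : Set α} {C : ℝ} (hA : μ A ≠ ⊤) (hC0 : 0 ≤ C)
    (hC : ∀ x ∈ A, ‖f x‖ ≤ C) : ‖⨍ x in A, f x ∂μ‖ ≤ C := by
  rw [setAverage_eq, norm_smul, norm_inv, Real.norm_of_nonneg measureReal_nonneg]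
  rcases eq_or_ne (μ.real A) 0 with h0 | h0
  · simpa [h0] using hC0
  · calc (μ.real A)⁻¹ * ‖∫ x in A, f x ∂μ‖ ≤ (μ.real A)⁻¹ * (C * μ.real A) := by
          gcongr; exact norm_setIntegral_le_of_norm_le_const hA.lt_top hC
      _ = C := by field_simp

noncomputable def orbitAverage (μ : Measure α) (u : α → E →L[𝕜] E) (A : Set α)
    (hu : ∀ x, IntegrableOn (fun t => u t x) A μ) : E →ₗ[𝕜] E where
  toFun x := ⨍ t in A, u t x ∂μ
  map_add' x y := by simp only [map_add, setAverage_eq, integral_add (hu x) (hu y), smul_add]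
  map_smul' c x := by
    simp only [map_smul, setAverage_eq, integral_smul, RingHom.id_apply, smul_comm]

variable {u : α → E →L[𝕜] E} {A : Set α} {hu : ∀ x, IntegrableOn (fun t => u t x) A μ}

theorem orbitAverage_apply (x : E) : orbitAverage μ u A hu x = ⨍ t in A, u t x ∂μ := rfl

theorem norm_orbitAverage_le (hA : μ A ≠ ⊤) (hu_norm : ∀ t x, ‖u t x‖ ≤ ‖x‖) (x : E) :
    ‖orbitAverage μ u A hu x‖ ≤ ‖x‖ :=
  norm_setAverage_le hA (norm_nonneg x) fun t _ => hu_norm t x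

theorem orbitAverage_eq_self [CompleteSpace E] (hA0 : μ A ≠ 0) (hA : μ A ≠ ⊤) {z : E}
    (hz : ∀ t, u t z = z) :
    orbitAverage μ u A hu z = z := by
  rw [orbitAverage_apply]
  simp only [hz]
  exact setAverage_const hA0 hA z

end Average

section Folner

variable {G 𝕜 E : Type*} [Group G] [MeasurableSpace G] [MeasurableMul G] {μ : Measure G}
  [μ.IsMulRightInvariant] [NontriviallyNormedField 𝕜] [NormedAddCommGroup E] [NormedSpace ℝ E]
  [NormedSpace 𝕜 E] [SMulCommClass ℝ 𝕜 E] {u : G → E →L[𝕜] E}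

-- By right invariance, `∫ t in A, u t (u g v) ∂μ = ∫ t in A * {g}, u t v ∂μ`.
theorem norm_orbitAverage_sub_le (hu_mul : ∀ s t x, u s (u t x) = u (s * t) x)
    (hu_norm : ∀ t x, ‖u t x‖ ≤ ‖x‖) {A : Set G} (hA : MeasurableSet A) (hAfin : μ A ≠ ⊤)
    (hu : ∀ x, IntegrableOn (fun t => u t x) A μ) (v : E) (g : G) :
    ‖orbitAverage μ u A hu (v - u g v)‖ ≤ μ.real (symmDiff (A * {g}) A) / μ.real A * ‖v‖ := by
  have hcomp : ∀ t, u t (u g v) = u (t * g) v := fun t => hu_mul t g v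
  have hAg : MeasurableSet (A * {g}) := by
    rw [Set.mul_singleton, Set.image_mul_right]; exact hA.preimage (measurable_mul_const g⁻¹)
  have hAgfin : μ (A * {g}) < ⊤ := by rw [measure_mul_singleton]; exact hAfin.lt_top
  have hIntAg : IntegrableOn (fun t => u t v) (A * {g}) μ := by
    rw [integrableOn_mul_singleton_iff]; simpa only [hcomp] using hu (u g v)
  have hIntegral : ∫ t in A, u t (u g v) ∂μ = ∫ t in A * {g}, u t v ∂μ := by
    simp only [hcomp, setIntegral_mul_singleton]
  rw [map_sub, orbitAverage_apply, orbitAverage_apply, setAverage_eq, setAverage_eq, ← smul_sub,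
    hIntegral, norm_smul, norm_inv, Real.norm_of_nonneg measureReal_nonneg, symmDiff_comm,
    div_eq_inv_mul, mul_assoc]
  gcongr
  calc _ ≤ ‖v‖ * μ.real (symmDiff A (A * {g})) :=
        norm_setIntegral_sub_setIntegral_le hA hAg hAfin.lt_top hAgfin (hu v) hIntAg
          fun t => hu_norm t v
    _ = _ := mul_comm _ _

theorem tendsto_orbitAverage_coboundary (hu_mul : ∀ s t x, u s (u t x) = u (s * t) x)
    (hu_norm : ∀ t x, ‖u t x‖ ≤ ‖x‖) {F : ℕ → Set G} (hFmeas : ∀ n, MeasurableSet (F n))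
    (hFfin : ∀ n, μ (F n) < ⊤)
    (hFolner : ∀ g : G, Tendsto
      (fun n => (μ (symmDiff (F n * ({g} : Set G)) (F n))).toReal / (μ (F n)).toReal)
      atTop (nhds 0))
    (hu : ∀ n x, IntegrableOn (fun t => u t x) (F n) μ) (v : E) (g : G) :
    Tendsto (fun n => orbitAverage μ u (F n) (hu n) (v - u g v)) atTop (𝓝 0) := by
  refine squeeze_zero_norm (fun n => norm_orbitAverage_sub_le hu_mul hu_norm (hFmeas n)
    (hFfin n).ne (hu n) v g) ?_
  simpa only [zero_mul, measureReal_def] using (hFolner g).mul_const ‖v‖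

end Folner

theorem stmt_1_general
    {G : Type*} [Group G] [TopologicalSpace G] [IsTopologicalGroup G]
    [MeasurableSpace G] [BorelSpace G]
    (μ : Measure G) [μ.IsMulRightInvariant]
    {H : Type*} [NormedAddCommGroup H] [InnerProductSpace ℂ H] [CompleteSpace H]
    (F : ℕ → Set G) (hFmeas : ∀ n, MeasurableSet (F n))
    (hFpos : ∀ n, 0 < μ (F n)) (hFfin : ∀ n, μ (F n) < ⊤)
    (hFolner : ∀ g : G, Tendsto
      (fun n => (μ (symmDiff (F n * ({g} : Set G)) (F n))).toReal / (μ (F n)).toReal)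
      atTop (nhds 0))
    (u : G → H →L[ℂ] H)
    (hu_iso : ∀ (t : G) (x : H), ‖u t x‖ = ‖x‖)
    (hu_mul : ∀ (s t : G) (x : H), u s (u t x) = u (s * t) x)
    (hInt : ∀ (n : ℕ) (x : H), IntegrableOn (fun t => u t x) (F n) μ)
    (x : H) :
    ∃ z : H, (∀ g : G, u g z = z) ∧
      Tendsto (fun n => (μ (F n)).toReal⁻¹ • ∫ t in F n, u t x ∂μ) atTop (nhds z) ∧
      ∀ w : H, (∀ g : G, u g w = w) → (inner ℂ (x - z) w : ℂ) = 0 := by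
  set V := commonFixedSubmodule u
  have : CompleteSpace V := (isClosed_commonFixedSubmodule u).completeSpace_coe
  have hu_norm : ∀ t y, ‖u t y‖ ≤ ‖y‖ := fun t y => (hu_iso t y).le
  set B := fun n => orbitAverage μ u (F n) (hInt n)
  have hfix : ∀ n, ∀ z ∈ V, B n z = z := fun n z hz =>
    orbitAverage_eq_self (hFpos n).ne' (hFfin n).ne (mem_commonFixedSubmodule.mp hz)
  have hcob : coboundarySpan u ≤ LinearMap.tendstoZeroSubmodule B atTop :=
    Submodule.span_le.mpr <| Set.range_subset_iff.mpr fun p =>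
      tendsto_orbitAverage_coboundary hu_mul hu_norm hFmeas hFfin hFolner hInt p.2 p.1
  have hperp : ∀ y ∈ Vᗮ, Tendsto (B · y) atTop (𝓝 0) := fun y hy =>
    LinearMap.tendsto_zero_of_mem_topologicalClosure (C := 1)
      (fun n y => by simpa using norm_orbitAverage_le (hFfin n).ne hu_norm y) hcob
      (orthogonal_commonFixedSubmodule hu_iso ▸ hy)
  refine ⟨V.starProjection x, mem_commonFixedSubmodule.mp (V.starProjection_apply_mem x), ?_,
    fun w hw => Submodule.inner_left_of_mem_orthogonal (mem_commonFixedSubmodule.mpr hw)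
      (V.sub_starProjection_mem_orthogonal x)⟩
  simpa only [B, orbitAverage_apply, setAverage_eq, measureReal_def] using
    tendsto_starProjection_of_tendsto_zero_orthogonal V hfix hperp x

/-- Mean ergodic theorem for a strongly continuous unitary representation of a
locally compact second-countable amenable group: the Følner averages `B_n x` converge in norm,
and the limit `z` is the orthogonal projection of `x` onto the subspace of `G`-invariant
vectors (i.e. `z` is invariant and `x - z` is orthogonal to every invariant vector). -/
theorem stmt_1
    {G : Type*} [Group G] [TopologicalSpace G] [IsTopologicalGroup G]
    [SecondCountableTopology G] [LocallyCompactSpace G]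
    [MeasurableSpace G] [BorelSpace G]
    (μ : Measure G) [μ.IsMulRightInvariant]
    {H : Type*} [NormedAddCommGroup H] [InnerProductSpace ℂ H] [CompleteSpace H]
    (F : ℕ → Set G) (hFmeas : ∀ n, MeasurableSet (F n))
    (hFpos : ∀ n, 0 < μ (F n)) (hFfin : ∀ n, μ (F n) < ⊤)
    (hFolner : ∀ g : G, Tendsto
      (fun n => (μ (symmDiff (F n * ({g} : Set G)) (F n))).toReal / (μ (F n)).toReal)
      atTop (nhds 0))
    (u : G → H →L[ℂ] H)
    (hu_iso : ∀ (t : G) (x : H), ‖u t x‖ = ‖x‖)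
    (hu_one : ∀ x : H, u 1 x = x)
    (hu_mul : ∀ (s t : G) (x : H), u s (u t x) = u (s * t) x)
    (hu_cont : ∀ x : H, Continuous fun t => u t x)
    (hInt : ∀ (n : ℕ) (x : H), IntegrableOn (fun t => u t x) (F n) μ)
    (x : H) :
    ∃ z : H, (∀ g : G, u g z = z) ∧
      Tendsto (fun n => (μ (F n)).toReal⁻¹ • ∫ t in F n, u t x ∂μ) atTop (nhds z) ∧
      ∀ w : H, (∀ g : G, u g w = w) → (inner ℂ (x - z) w : ℂ) = 0 :=
  stmt_1_general μ F hFmeas hFpos hFfin hFolner u hu_iso hu_mul hInt x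
end

section
/- Let (E, G, γ) be a dynamical system on a Banach space E with sup_{s∈G} ‖γ_s‖ < ∞, over an amenable group G with right-invariant Haar measure μ and Følner sequence (F_n). Define B_m(a) := (1/μ(F_m)) ∫_{F_m} γ_s(a) dμ(s). Then for every k ∈ ℕ and a ∈ E, lim_{n→∞} ‖B_n(a − B_k(a))‖ = 0. -/
/-!
Write `f s = γ s a`. Since `γ s (B_k a)` is the average of `t ↦ f (s * t)` over `F k`, Fubini
turns `B_n (a - B_k a)` into the average over `t ∈ F k` of `⨍_{F n} f - ⨍_{F n} f (· * t)`, and by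
right invariance the second term is the average of `f` over `F n * {t}`. Hence the integrand is
bounded by `‖f‖_∞ μ((F n * {t}) ∆ F n) / μ(F n)`, which tends to `0` for every `t` by the Følner
property, and uniformly by `2 ‖f‖_∞`; dominated convergence concludes.
-/

open MeasureTheory Filter Topology Pointwise

open scoped ENNReal symmDiff

namespace MeasureTheory

section Average

variable {α β E : Type*} [MeasurableSpace α] [MeasurableSpace β] {μ : Measure α} {ν : Measure β}
  [NormedAddCommGroup E] [NormedSpace ℝ E]

theorem norm_setAverage_le_of_norm_le {f : α → E} {s : Set α} {M : ℝ} (hM : 0 ≤ M)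
    (hf : ∀ x, ‖f x‖ ≤ M) : ‖⨍ x in s, f x ∂μ‖ ≤ M := by
  rw [setAverage_eq, norm_smul, norm_inv, Real.norm_of_nonneg measureReal_nonneg]
  rcases eq_or_ne (μ s) ∞ with hs | hs
  · simp [measureReal_def, hs, hM]
  rcases eq_or_ne (μ.real s) 0 with hs₀ | hs₀
  · simp [hs₀, hM]
  calc (μ.real s)⁻¹ * ‖∫ x in s, f x ∂μ‖ ≤ (μ.real s)⁻¹ * (M * μ.real s) := by
        gcongr
        exact norm_setIntegral_le_of_norm_le_const hs.lt_top fun x _ => hf x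
    _ = M := by field_simp

theorem norm_setIntegral_sub_setIntegral_le {f : α → E} {s t : Set α} {M : ℝ}
    (hf : ∀ x, ‖f x‖ ≤ M) (hs : MeasurableSet s) (ht : MeasurableSet t)
    (hfs : IntegrableOn f s μ) (hft : IntegrableOn f t μ) (hst : μ (s ∆ t) ≠ ∞) :
    ‖∫ x in s, f x ∂μ - ∫ x in t, f x ∂μ‖ ≤ M * μ.real (s ∆ t) := by
  rw [Set.symmDiff_def] at hst ⊢
  have hst' : μ (s \ t) < ∞ := (measure_mono Set.subset_union_left).trans_lt hst.lt_top
  have hts' : μ (t \ s) < ∞ := (measure_mono Set.subset_union_right).trans_lt hst.lt_top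
  have hsplit : ∫ x in s, f x ∂μ - ∫ x in t, f x ∂μ
      = ∫ x in s \ t, f x ∂μ - ∫ x in t \ s, f x ∂μ := by
    rw [← integral_inter_add_sdiff ht hfs, ← integral_inter_add_sdiff hs hft, Set.inter_comm]
    abel
  rw [hsplit, measureReal_union disjoint_sdiff_sdiff (ht.diff hs), mul_add]
  exact (norm_sub_le _ _).trans <| add_le_add
    (norm_setIntegral_le_of_norm_le_const hst' fun x _ => hf x)
    (norm_setIntegral_le_of_norm_le_const hts' fun x _ => hf x)

theorem tendsto_setAverage_of_dominated_convergence {ι : Type*} {l : Filter ι}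
    [l.IsCountablyGenerated] {F : ι → α → E} {f : α → E} {s : Set α} (hs : μ s ≠ ∞) {M : ℝ}
    (hF_meas : ∀ n, AEStronglyMeasurable (F n) (μ.restrict s)) (h_bound : ∀ n x, ‖F n x‖ ≤ M)
    (h_lim : ∀ x, Tendsto (fun n => F n x) l (𝓝 (f x))) :
    Tendsto (fun n => ⨍ x in s, F n x ∂μ) l (𝓝 (⨍ x in s, f x ∂μ)) := by
  have : IsFiniteMeasure (μ.restrict s) := isFiniteMeasure_restrict.mpr hs
  simp_rw [setAverage_eq]
  exact (tendsto_integral_filter_of_dominated_convergence (fun _ => M)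
    (.of_forall hF_meas) (.of_forall fun n => .of_forall (h_bound n)) (integrable_const M)
    (.of_forall h_lim)).const_smul _

theorem setAverage_sub {f g : α → E} {s : Set α} (hf : IntegrableOn f s μ)
    (hg : IntegrableOn g s μ) :
    ⨍ x in s, (f x - g x) ∂μ = ⨍ x in s, f x ∂μ - ⨍ x in s, g x ∂μ := by
  simp only [setAverage_eq, integral_sub hf hg, smul_sub]

theorem setAverage_sub_setAverage_comm [CompleteSpace E] {f : α → E} {g : α → β → E}
    {s : Set α} {t : Set β} (hs : μ s ≠ ∞) (ht₀ : ν t ≠ 0) (ht : ν t ≠ ∞) (hf : IntegrableOn f s μ)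
    (hg : Integrable (Function.uncurry g) ((μ.restrict s).prod (ν.restrict t))) :
    ⨍ x in s, (f x - ⨍ y in t, g x y ∂ν) ∂μ
      = ⨍ y in t, (⨍ x in s, f x ∂μ - ⨍ x in s, g x y ∂μ) ∂ν := by
  have : IsFiniteMeasure (μ.restrict s) := isFiniteMeasure_restrict.mpr hs
  have : IsFiniteMeasure (ν.restrict t) := isFiniteMeasure_restrict.mpr ht
  have hg_left : Integrable (fun x => ⨍ y in t, g x y ∂ν) (μ.restrict s) := by
    simp_rw [setAverage_eq]; exact hg.integral_prod_left.smul _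
  have hg_right : Integrable (fun y => ⨍ x in s, g x y ∂μ) (ν.restrict t) := by
    simp_rw [setAverage_eq]; exact hg.integral_prod_right.smul _
  have hswap : ⨍ x in s, ⨍ y in t, g x y ∂ν ∂μ = ⨍ y in t, ⨍ x in s, g x y ∂μ ∂ν := by
    simp_rw [setAverage_eq, integral_smul, integral_integral_swap hg, smul_comm (μ.real s)⁻¹]
  rw [setAverage_sub hf hg_left, setAverage_sub (integrable_const _) hg_right, hswap,
    setAverage_const ht₀ ht]

end Average

section RightInvariant

variable {G E : Type*} [Group G] [MeasurableSpace G] [MeasurableMul G] {μ : Measure G}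
  [μ.IsMulRightInvariant] [NormedAddCommGroup E] [NormedSpace ℝ E]

theorem measure_mul_singleton (s : Set G) (g : G) : μ (s * {g}) = μ s := by
  rw [Set.mul_singleton, Set.image_mul_right, measure_preimage_mul_right]

theorem setIntegral_mul_singleton (f : G → E) (s : Set G) (g : G) :
    ∫ x in s * {g}, f x ∂μ = ∫ x in s, f (x * g) ∂μ := by
  rw [Set.mul_singleton]
  exact (measurePreserving_mul_right μ g).setIntegral_image_emb (measurableEmbedding_mulRight g) _ _

theorem norm_setAverage_sub_setAverage_mul_right_le {f : G → E} {s : Set G} {M : ℝ}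
    (hf : AEStronglyMeasurable f μ) (hfM : ∀ x, ‖f x‖ ≤ M) (hs : MeasurableSet s)
    (hs_fin : μ s ≠ ∞) (g : G) :
    ‖⨍ x in s, f x ∂μ - ⨍ x in s, f (x * g) ∂μ‖ ≤ M * (μ.real ((s * {g}) ∆ s) / μ.real s) := by
  have hsg_fin : μ (s * {g}) ≠ ∞ := by rwa [measure_mul_singleton]
  have hint : ∀ {u}, μ u ≠ ∞ → IntegrableOn f u μ := fun hu =>
    Measure.integrableOn_of_bounded hu hf (.of_forall hfM)
  have hΔ : μ (s ∆ (s * {g})) ≠ ∞ :=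
    ((measure_mono symmDiff_le_sup).trans_lt (measure_union_lt_top hs_fin.lt_top hsg_fin.lt_top)).ne
  have hsg : MeasurableSet (s * {g}) := by
    rw [Set.mul_singleton, Set.image_mul_right]; exact measurable_mul_const _ hs
  have := norm_setIntegral_sub_setIntegral_le hfM hs hsg (hint hs_fin) (hint hsg_fin) hΔ
  rw [symmDiff_comm] at this
  rw [setAverage_eq, setAverage_eq, ← setIntegral_mul_singleton, ← smul_sub, norm_smul, norm_inv,
    Real.norm_of_nonneg measureReal_nonneg, div_eq_inv_mul, mul_left_comm]
  exact mul_le_mul_of_nonneg_left this (inv_nonneg.mpr measureReal_nonneg)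

theorem tendsto_setAverage_sub_setAverage_mul_right {ι : Type*} {l : Filter ι} {F : ι → Set G}
    {f : G → E} {M : ℝ} (hf : AEStronglyMeasurable f μ) (hfM : ∀ x, ‖f x‖ ≤ M)
    (hF : ∀ n, MeasurableSet (F n)) (hF_fin : ∀ n, μ (F n) ≠ ∞) {g : G}
    (hFolner : Tendsto (fun n => μ.real ((F n * {g}) ∆ F n) / μ.real (F n)) l (𝓝 0)) :
    Tendsto (fun n => ⨍ x in F n, f x ∂μ - ⨍ x in F n, f (x * g) ∂μ) l (𝓝 0) := by
  refine squeeze_zero_norm (fun n =>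
    norm_setAverage_sub_setAverage_mul_right_le hf hfM (hF n) (hF_fin n) g) ?_
  simpa only [mul_zero] using hFolner.const_mul M

end RightInvariant

section Representation

variable {G E : Type*} [Group G] [MeasurableSpace G] [MeasurableMul₂ G] {μ : Measure G}
  [NormedAddCommGroup E] [NormedSpace ℝ E]

theorem setAverage_apply_sub_setAverage_eq [CompleteSpace E] {γ : G → E →L[ℝ] E}
    (hγ_mul : ∀ s t a, γ s (γ t a) = γ (s * t) a) {a : E}
    (hγa : StronglyMeasurable fun s => γ s a) {M : ℝ} (hγM : ∀ s, ‖γ s a‖ ≤ M) {A K : Set G}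
    (hA : μ A ≠ ∞) (hK₀ : μ K ≠ 0) (hK : μ K ≠ ∞) :
    ⨍ s in A, γ s (a - ⨍ t in K, γ t a ∂μ) ∂μ
      = ⨍ t in K, (⨍ s in A, γ s a ∂μ - ⨍ s in A, γ (s * t) a ∂μ) ∂μ := by
  have : IsFiniteMeasure (μ.restrict A) := isFiniteMeasure_restrict.mpr hA
  have : IsFiniteMeasure (μ.restrict K) := isFiniteMeasure_restrict.mpr hK
  have hint : ∀ {u}, μ u ≠ ∞ → IntegrableOn (fun s => γ s a) u μ := fun hu =>
    Measure.integrableOn_of_bounded hu hγa.aestronglyMeasurable (.of_forall hγM)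
  have hcomm : ∀ s, γ s (⨍ t in K, γ t a ∂μ) = ⨍ t in K, γ (s * t) a ∂μ := fun s => by
    rw [setAverage_eq, setAverage_eq, map_smul, ← (γ s).integral_comp_comm (hint hK)]
    simp only [hγ_mul]
  have hprod : Integrable (fun p : G × G => γ (p.1 * p.2) a) ((μ.restrict A).prod (μ.restrict K)) :=
    (integrable_const M).mono' (hγa.comp_measurable measurable_mul).aestronglyMeasurable
      (.of_forall fun p => hγM _)
  simp_rw [map_sub, hcomm]
  exact setAverage_sub_setAverage_comm hA hK₀ hK (hint hA) hprod

theorem StronglyMeasurable.setAverage_mul_right {f : G → E} (hf : StronglyMeasurable f)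
    {A : Set G} (hA : μ A ≠ ∞) : StronglyMeasurable fun t => ⨍ s in A, f (s * t) ∂μ := by
  have : IsFiniteMeasure (μ.restrict A) := isFiniteMeasure_restrict.mpr hA
  simp_rw [setAverage_eq]
  exact (StronglyMeasurable.integral_prod_left (f := fun s t => f (s * t))
    (hf.comp_measurable measurable_mul)).const_smul _

end Representation

end MeasureTheory

theorem stmt_2_general
    {G : Type*} [Group G] [TopologicalSpace G] [IsTopologicalGroup G]
    [SecondCountableTopology G] [MeasurableSpace G] [BorelSpace G]
    (μ : Measure G) [μ.IsMulRightInvariant]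
    {E : Type*} [NormedAddCommGroup E] [NormedSpace ℝ E] [CompleteSpace E]
    (F : ℕ → Set G) (hFmeas : ∀ n, MeasurableSet (F n))
    (hFpos : ∀ n, 0 < μ (F n)) (hFfin : ∀ n, μ (F n) < ⊤)
    (hFolner : ∀ g : G, Tendsto
      (fun n => (μ (symmDiff (F n * ({g} : Set G)) (F n))).toReal / (μ (F n)).toReal)
      atTop (nhds 0))
    (γ : G → E →L[ℝ] E)
    (hγ_mul : ∀ (s t : G) (a : E), γ s (γ t a) = γ (s * t) a)
    (hγ_cont : ∀ a : E, Continuous fun s => γ s a)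
    (C : ℝ) (hC : ∀ s : G, ‖γ s‖ ≤ C)
    (k : ℕ) (a : E) :
    Tendsto (fun n =>
        ‖(μ (F n)).toReal⁻¹ •
          ∫ s in F n, γ s (a - (μ (F k)).toReal⁻¹ • ∫ t in F k, γ t a ∂μ) ∂μ‖)
      atTop (nhds 0) := by
  have hM : 0 ≤ C * ‖a‖ := mul_nonneg ((norm_nonneg _).trans (hC 1)) (norm_nonneg a)
  have hγM : ∀ s, ‖γ s a‖ ≤ C * ‖a‖ := fun s => (γ s).le_of_opNorm_le (hC s) a
  have hγa : StronglyMeasurable fun s => γ s a := (hγ_cont a).stronglyMeasurable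
  have hfin : ∀ n, μ (F n) ≠ ⊤ := fun n => (hFfin n).ne
  have hD_meas : ∀ n, AEStronglyMeasurable
      (fun t => ⨍ s in F n, γ s a ∂μ - ⨍ s in F n, γ (s * t) a ∂μ) (μ.restrict (F k)) :=
    fun n => (stronglyMeasurable_const.sub (hγa.setAverage_mul_right (hfin n))).aestronglyMeasurable
  have hD_bound : ∀ n t, ‖⨍ s in F n, γ s a ∂μ - ⨍ s in F n, γ (s * t) a ∂μ‖ ≤ 2 * (C * ‖a‖) :=
    fun n t => (norm_sub_le _ _).trans <| by
      linarith [norm_setAverage_le_of_norm_le (μ := μ) (s := F n) hM hγM,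
        norm_setAverage_le_of_norm_le (μ := μ) (s := F n) hM fun s => hγM (s * t)]
  simp_rw [← measureReal_def, ← setAverage_eq, setAverage_apply_sub_setAverage_eq hγ_mul hγa hγM
    (hfin _) (hFpos k).ne' (hfin k)]
  simpa using (tendsto_setAverage_of_dominated_convergence (hfin k) hD_meas hD_bound fun t =>
    tendsto_setAverage_sub_setAverage_mul_right hγa.aestronglyMeasurable hγM hFmeas hfin
      (hFolner t)).norm

/-- For a uniformly bounded dynamical system `(E, G, γ)` on a Banach space `E`
over an amenable group with Følner sequence `(F n)`, the averages satisfy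
`‖B_n(a − B_k(a))‖ → 0` for every `k` and `a ∈ E`. -/
theorem stmt_2
    {G : Type*} [Group G] [TopologicalSpace G] [IsTopologicalGroup G]
    [SecondCountableTopology G] [LocallyCompactSpace G]
    [MeasurableSpace G] [BorelSpace G]
    (μ : Measure G) [μ.IsMulRightInvariant]
    {E : Type*} [NormedAddCommGroup E] [NormedSpace ℝ E] [CompleteSpace E]
    (F : ℕ → Set G) (hFmeas : ∀ n, MeasurableSet (F n))
    (hFpos : ∀ n, 0 < μ (F n)) (hFfin : ∀ n, μ (F n) < ⊤)
    (hFolner : ∀ g : G, Tendsto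
      (fun n => (μ (symmDiff (F n * ({g} : Set G)) (F n))).toReal / (μ (F n)).toReal)
      atTop (nhds 0))
    (γ : G → E →L[ℝ] E)
    (hγ_mul : ∀ (s t : G) (a : E), γ s (γ t a) = γ (s * t) a)
    (hγ_cont : ∀ a : E, Continuous fun s => γ s a)
    (C : ℝ) (hC : ∀ s : G, ‖γ s‖ ≤ C)
    (hInt : ∀ (n : ℕ) (a : E), IntegrableOn (fun s => γ s a) (F n) μ)
    (k : ℕ) (a : E) :
    Tendsto (fun n =>
        ‖(μ (F n)).toReal⁻¹ •
          ∫ s in F n, γ s (a - (μ (F k)).toReal⁻¹ • ∫ t in F k, γ t a ∂μ) ∂μ‖)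
      atTop (nhds 0) :=
  stmt_2_general μ F hFmeas hFpos hFfin hFolner γ hγ_mul hγ_cont C hC k a
end
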